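/- arXiv:1803.10347 — 2 statements merged into one kernel-verified Lean document; each statement's English description precedes it below -/
import Mathlib

section
/- Let n, m be positive integers, let s be a positive real number, and let f : B^n → B^m be a holomorphic map with f(0) = 0 such that 1 − ⟨f(z), f(w)⟩ = (1 − ⟨z,w⟩)^s for all z, w ∈ B^n, where the complex power is the principal branch (well defined since Re(1−⟨z,w⟩) > 0 when |⟨z,w⟩| < 1). Then s = 1; consequently ⟨f(z), f(w)⟩ = ⟨z,w⟩ for all z, w ∈ B^n. -/
/-!
Restrict `f` to a complex line through the origin, `g ζ = f (ζ • e)`. The functional equation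
becomes `⟪g ω, g ζ⟫ = 1 - (1 - conj ω * ζ) ^ s`, and differentiating `k` times in `ζ` and `l` times
in `ω` at `0` shows that the Taylor coefficients `A k` of `g` are pairwise orthogonal with
`‖A k‖ ^ 2 = a k * k!`, where `a k = -(-1) ^ k * s (s - 1) ⋯ (s - k + 1)` is the `k`-th derivative
of `1 - (1 - x) ^ s` at `0` (`binomialKernelCoeff`). Since `a 2 = s * (1 - s)`, this
forces `s ≤ 1`. If `s` were not a natural number, all `a k` with `k ≥ 1` would be nonzero, giving
infinitely many nonzero orthogonal vectors in `ℂᵐ`. Hence `s = 1`.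
-/

/-- The standard Hermitian inner product `⟨z,w⟩ = ∑ zᵢ · conj(wᵢ)` on `ℂⁿ`. -/
noncomputable def herm {n : ℕ} (z w : EuclideanSpace ℂ (Fin n)) : ℂ :=
  ∑ i, z i * (starRingEnd ℂ) (w i)

open Metric Complex ComplexConjugate Filter Topology
open scoped InnerProductSpace

theorem ContinuousLinearMap.iteratedDeriv_comp_left {𝕜 F G : Type*} [NontriviallyNormedField 𝕜]
    [NormedAddCommGroup F] [NormedSpace 𝕜 F] [NormedAddCommGroup G] [NormedSpace 𝕜 G]
    (L : F →L[𝕜] G) {f : 𝕜 → F} {x : 𝕜} {k : ℕ} (hf : ContDiffAt 𝕜 k f x) :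
    iteratedDeriv k (L ∘ f) x = L (iteratedDeriv k f x) := by
  simp [iteratedDeriv_eq_iteratedFDeriv, L.iteratedFDeriv_comp_left hf le_rfl]

theorem iteratedDeriv_one_sub_mul_cpow (c t : ℂ) (k : ℕ) {ζ : ℂ} (hζ : 1 - c * ζ ∈ slitPlane) :
    iteratedDeriv k (fun z => (1 - c * z) ^ t) ζ
      = (descPochhammer ℂ k).eval t * (-c) ^ k * (1 - c * ζ) ^ (t - k) := by
  induction k generalizing ζ with
  | zero => simp
  | succ k ih =>
    have hU : IsOpen {z : ℂ | 1 - c * z ∈ slitPlane} :=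
      isOpen_slitPlane.preimage (by fun_prop)
    have hderiv : HasDerivAt (fun z => (1 - c * z) ^ (t - k))
        ((t - k) * (1 - c * ζ) ^ (t - k - 1) * (-c)) ζ := by
      simpa using ((hasDerivAt_id ζ).const_mul c |>.const_sub 1).cpow_const hζ
    have hnear : iteratedDeriv k (fun z => (1 - c * z) ^ t) =ᶠ[𝓝 ζ]
        fun z => (descPochhammer ℂ k).eval t * (-c) ^ k * (1 - c * z) ^ (t - k) := by
      filter_upwards [hU.mem_nhds hζ] with z hz using ih hz
    rw [iteratedDeriv_succ, hnear.deriv_eq, deriv_const_mul _ hderiv.differentiableAt, hderiv.deriv,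
      descPochhammer_succ_right, Polynomial.eval_mul]
    simp only [Polynomial.eval_sub, Polynomial.eval_X, Polynomial.eval_natCast, Nat.cast_succ]
    rw [sub_sub]
    ring

theorem exists_eq_zero_of_pairwise_inner_eq_zero {𝕜 E ι : Type*} [RCLike 𝕜]
    [NormedAddCommGroup E] [InnerProductSpace 𝕜 E] [FiniteDimensional 𝕜 E] [Infinite ι]
    {v : ι → E} (hv : Pairwise fun i j => ⟪v i, v j⟫_𝕜 = 0) : ∃ i, v i = 0 := by
  by_contra! hne
  exact Module.Finite.not_linearIndependent_of_infinite v
    (linearIndependent_of_ne_zero_of_inner_eq_zero hne fun i j hij => hv hij)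

noncomputable def binomialKernelCoeff (s : ℝ) (k : ℕ) : ℝ :=
  -((-1) ^ k * (descPochhammer ℝ k).eval s)

theorem le_one_of_binomialKernelCoeff_two_nonneg {s : ℝ} (hs : 0 < s)
    (h : 0 ≤ binomialKernelCoeff s 2) : s ≤ 1 := by
  simp only [binomialKernelCoeff, descPochhammer_eval_eq_prod_range, Finset.prod_range_succ,
    Finset.prod_range_zero] at h
  norm_num at h
  nlinarith

theorem exists_nat_eq_of_binomialKernelCoeff_eq_zero {s : ℝ} {k : ℕ}
    (h : binomialKernelCoeff s k = 0) : ∃ j : ℕ, s = j := by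
  rw [binomialKernelCoeff, neg_eq_zero, mul_eq_zero, descPochhammer_eval_eq_prod_range,
    Finset.prod_eq_zero_iff] at h
  obtain h | ⟨j, -, hj⟩ := h
  · exact absurd h (pow_ne_zero _ (neg_ne_zero.mpr one_ne_zero))
  · exact ⟨j, sub_eq_zero.mp hj⟩

section Kernel

variable {E : Type*} [NormedAddCommGroup E] [InnerProductSpace ℂ E] [CompleteSpace E]
  {g : ℂ → E} {U : Set ℂ} {s : ℝ}

theorem inner_iteratedDeriv_eq_of_inner_eq_one_sub_cpow (hU : IsOpen U) (h0 : 0 ∈ U)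
    (hg : DifferentiableOn ℂ g U)
    (hK : ∀ ζ ∈ U, ∀ ω ∈ U, ⟪g ω, g ζ⟫_ℂ = 1 - (1 - conj ω * ζ) ^ (s : ℂ))
    {k : ℕ} (hk : 0 < k) {ω : ℂ} (hω : ω ∈ U) :
    ⟪g ω, iteratedDeriv k g 0⟫_ℂ = binomialKernelCoeff s k * conj ω ^ k := by
  have hgk : ContDiffAt ℂ k g 0 := (hg.contDiffOn hU).contDiffAt (hU.mem_nhds h0)
  have hnear : (fun ζ => ⟪g ω, g ζ⟫_ℂ) =ᶠ[𝓝 0] fun ζ => 1 - (1 - conj ω * ζ) ^ (s : ℂ) := by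
    filter_upwards [hU.mem_nhds h0] with ζ hζ using hK ζ hζ ω hω
  have hcast : (((descPochhammer ℝ k).eval s : ℝ) : ℂ) = (descPochhammer ℂ k).eval (s : ℂ) := by
    simp [descPochhammer_eval_eq_prod_range]
  calc ⟪g ω, iteratedDeriv k g 0⟫_ℂ
      = iteratedDeriv k (fun ζ => ⟪g ω, g ζ⟫_ℂ) 0 :=
        ((innerSL ℂ (g ω)).iteratedDeriv_comp_left hgk).symm
    _ = iteratedDeriv k (fun ζ => 1 - (1 - conj ω * ζ) ^ (s : ℂ)) 0 := hnear.iteratedDeriv_eq k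
    _ = binomialKernelCoeff s k * conj ω ^ k := by
      rw [iteratedDeriv_const_sub hk, iteratedDeriv_neg,
        iteratedDeriv_one_sub_mul_cpow _ _ _ (by simp), mul_zero, sub_zero, one_cpow, mul_one,
        binomialKernelCoeff, neg_pow, ← hcast]
      push_cast
      ring

theorem inner_iteratedDeriv_iteratedDeriv_of_inner_eq_one_sub_cpow (hU : IsOpen U) (h0 : 0 ∈ U)
    (hg : DifferentiableOn ℂ g U)
    (hK : ∀ ζ ∈ U, ∀ ω ∈ U, ⟪g ω, g ζ⟫_ℂ = 1 - (1 - conj ω * ζ) ^ (s : ℂ))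
    {k : ℕ} (hk : 0 < k) (l : ℕ) :
    ⟪iteratedDeriv k g 0, iteratedDeriv l g 0⟫_ℂ
      = binomialKernelCoeff s k * if l = k then (k.factorial : ℂ) else 0 := by
  have hgl : ContDiffAt ℂ l g 0 := (hg.contDiffOn hU).contDiffAt (hU.mem_nhds h0)
  have hnear : (fun ω => ⟪iteratedDeriv k g 0, g ω⟫_ℂ) =ᶠ[𝓝 0]
      fun ω => (binomialKernelCoeff s k : ℂ) * ω ^ k := by
    filter_upwards [hU.mem_nhds h0] with ω hω
    rw [← inner_conj_symm, inner_iteratedDeriv_eq_of_inner_eq_one_sub_cpow hU h0 hg hK hk hω]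
    simp
  calc ⟪iteratedDeriv k g 0, iteratedDeriv l g 0⟫_ℂ
      = iteratedDeriv l (fun ω => ⟪iteratedDeriv k g 0, g ω⟫_ℂ) 0 :=
        ((innerSL ℂ (iteratedDeriv k g 0)).iteratedDeriv_comp_left hgl).symm
    _ = _ := by
      rw [hnear.iteratedDeriv_eq l, iteratedDeriv_const_mul_field, iteratedDeriv_fun_pow_zero,
        Nat.cast_ite, Nat.cast_zero]

theorem exponent_eq_one_of_inner_eq_one_sub_cpow [FiniteDimensional ℂ E] (hs : 0 < s)
    (hU : IsOpen U) (h0 : 0 ∈ U) (hg : DifferentiableOn ℂ g U)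
    (hK : ∀ ζ ∈ U, ∀ ω ∈ U, ⟪g ω, g ζ⟫_ℂ = 1 - (1 - conj ω * ζ) ^ (s : ℂ)) :
    s = 1 := by
  have hgram {k : ℕ} (hk : 0 < k) (l : ℕ) :=
    inner_iteratedDeriv_iteratedDeriv_of_inner_eq_one_sub_cpow hU h0 hg hK hk l
  have hnorm_sq : ∀ k, 0 < k →
      ‖iteratedDeriv k g 0‖ ^ 2 = binomialKernelCoeff s k * k.factorial := by
    intro k hk
    have := congrArg re (hgram hk k)
    rw [if_pos rfl, inner_self_eq_norm_sq_to_K] at this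
    exact_mod_cast this
  have hle : s ≤ 1 := le_one_of_binomialKernelCoeff_two_nonneg hs <|
    nonneg_of_mul_nonneg_left ((hnorm_sq 2 two_pos) ▸ sq_nonneg _) (by positivity)
  obtain ⟨k, hk⟩ := exists_eq_zero_of_pairwise_inner_eq_zero (𝕜 := ℂ)
    (v := fun k : ℕ => iteratedDeriv (k + 1) g 0) fun k l hkl => by
      dsimp only
      rw [hgram k.succ_pos, if_neg (by omega), mul_zero]
  obtain ⟨j, rfl⟩ := exists_nat_eq_of_binomialKernelCoeff_eq_zero (s := s) (k := k + 1) <| by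
    simpa [hk, Nat.factorial_ne_zero] using (hnorm_sq (k + 1) k.succ_pos).symm
  norm_cast at hs hle ⊢
  omega

end Kernel

theorem herm_eq_inner {n : ℕ} (z w : EuclideanSpace ℂ (Fin n)) : herm z w = ⟪w, z⟫_ℂ := by
  simp [herm, PiLp.inner_apply]

theorem exponent_eq_one_of_polarized_functional_equation_general
    (n m : ℕ) (hn : 0 < n) (s : ℝ) (hs : 0 < s)
    (f : EuclideanSpace ℂ (Fin n) → EuclideanSpace ℂ (Fin m))
    (hf_holo : DifferentiableOn ℂ f (Metric.ball 0 1))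
    (heq : ∀ z ∈ Metric.ball (0 : EuclideanSpace ℂ (Fin n)) 1,
           ∀ w ∈ Metric.ball (0 : EuclideanSpace ℂ (Fin n)) 1,
      1 - herm (f z) (f w) = (1 - herm z w) ^ (s : ℂ)) :
    s = 1 ∧
      ∀ z ∈ Metric.ball (0 : EuclideanSpace ℂ (Fin n)) 1,
      ∀ w ∈ Metric.ball (0 : EuclideanSpace ℂ (Fin n)) 1,
        herm (f z) (f w) = herm z w := by
  set e : EuclideanSpace ℂ (Fin n) := EuclideanSpace.single ⟨0, hn⟩ 1
  have he : ‖e‖ = 1 := by simp [e]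
  have hmaps : Set.MapsTo (· • e) (ball (0 : ℂ) 1) (ball 0 1) := fun ζ hζ => by
    simpa [norm_smul, he] using hζ
  have hs1 : s = 1 := by
    refine exponent_eq_one_of_inner_eq_one_sub_cpow (g := fun ζ => f (ζ • e)) hs isOpen_ball
      (mem_ball_self one_pos) (hf_holo.comp (differentiable_id.smul_const e).differentiableOn hmaps)
      fun ζ hζ ω hω => ?_
    have h := heq _ (hmaps hζ) _ (hmaps hω)
    simp only [herm_eq_inner, inner_smul_left, inner_smul_right, inner_self_eq_norm_sq_to_K, he,
      RCLike.ofReal_one, one_pow, mul_one] at h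
    rw [mul_comm (conj ω)]
    linear_combination -h
  refine ⟨hs1, fun z hz w hw => ?_⟩
  simpa [hs1] using heq z hz w hw

theorem exponent_eq_one_of_polarized_functional_equation
    (n m : ℕ) (hn : 0 < n) (hm : 0 < m) (s : ℝ) (hs : 0 < s)
    (f : EuclideanSpace ℂ (Fin n) → EuclideanSpace ℂ (Fin m))
    (hf_maps : ∀ z ∈ Metric.ball (0 : EuclideanSpace ℂ (Fin n)) 1,
      f z ∈ Metric.ball (0 : EuclideanSpace ℂ (Fin m)) 1)
    (hf_holo : DifferentiableOn ℂ f (Metric.ball 0 1))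
    (hf0 : f 0 = 0)
    (heq : ∀ z ∈ Metric.ball (0 : EuclideanSpace ℂ (Fin n)) 1,
           ∀ w ∈ Metric.ball (0 : EuclideanSpace ℂ (Fin n)) 1,
      1 - herm (f z) (f w) = (1 - herm z w) ^ (s : ℂ)) :
    s = 1 ∧
      ∀ z ∈ Metric.ball (0 : EuclideanSpace ℂ (Fin n)) 1,
      ∀ w ∈ Metric.ball (0 : EuclideanSpace ℂ (Fin n)) 1,
        herm (f z) (f w) = herm z w :=
  exponent_eq_one_of_polarized_functional_equation_general n m hn s hs f hf_holo heq
end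

section
/- Let λ, μ be positive real numbers and let f : Δ → Δ be a holomorphic map for which there exists a nowhere-vanishing holomorphic function h on Δ with (1−|f(z)|²)^μ = |h(z)|²(1−|z|²)^λ for all z ∈ Δ. Then λ = μ and f is a holomorphic automorphism of the unit disk: there exist θ ∈ ℝ and a ∈ Δ such that f(z) = e^{iθ}(z−a)/(1−conj(a)·z) for all z ∈ Δ. -/
/-!
Polarize: `exp (μ log (1 - f z * conj (f (conj w))) - λ log (1 - z w)) - h z * conj (h (conj w))`
is holomorphic on the bidisk and vanishes on the totally real set `w = conj z`, hence near `0`.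
The mixed second difference in `(z, w)` of its logarithm kills the factor coming from `h`
(a continuous logarithm of `1` on a connected set is constant), and after normalizing `f 0 = 0` by
a Blaschke factor, `F := blaschke (f 0) ∘ f` satisfies `1 - F z * conj (F (conj w)) = (1 - z w) ^ t`
with `t = λ / μ`. Differentiating in `z` at `0` shows that `F z = c z` with `|c| ^ 2 = t`, and then
`1 - t u = (1 - u) ^ t` for small real `u > 0` forces `t = 1` by the strict Bernoulli inequality.
-/

open Complex ComplexConjugate Metric Set Filter Topology

theorem norm_mul_lt_one {α : Type*} [SeminormedRing α] {a b : α} (ha : ‖a‖ < 1) (hb : ‖b‖ < 1) :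
    ‖a * b‖ < 1 :=
  (norm_mul_le a b).trans_lt (mul_lt_one_of_nonneg_of_lt_one_left (norm_nonneg a) ha hb.le)

theorem Complex.one_sub_mem_slitPlane {u : ℂ} (hu : ‖u‖ < 1) : 1 - u ∈ slitPlane := by
  simpa [sub_eq_add_neg] using mem_slitPlane_of_norm_lt_one (z := -u) (by simpa using hu)

theorem Complex.one_sub_mul_ne_zero {a b : ℂ} (ha : ‖a‖ < 1) (hb : ‖b‖ < 1) : 1 - a * b ≠ 0 :=
  slitPlane_ne_zero (one_sub_mem_slitPlane (norm_mul_lt_one ha hb))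

theorem DifferentiableOn.conj_conj_ball {f : ℂ → ℂ} {r : ℝ}
    (hf : DifferentiableOn ℂ f (ball 0 r)) :
    DifferentiableOn ℂ (fun w => conj (f (conj w))) (ball 0 r) := by
  intro w hw
  have hw' : conj w ∈ ball (0 : ℂ) r := by simpa using hw
  simpa [Function.comp_def] using
    ((hf.differentiableAt (isOpen_ball.mem_nhds hw')).conj_conj).differentiableWithinAt

theorem IsPreconnected.eq_of_exp_eq_one {α : Type*} [TopologicalSpace α] {S : Set α}
    (hS : IsPreconnected S) {g : α → ℂ} (hg : ContinuousOn g S) (hexp : ∀ p ∈ S, exp (g p) = 1)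
    {p q : α} (hp : p ∈ S) (hq : q ∈ S) : g p = g q := by
  have hmaps : MapsTo g S (AddSubgroup.zmultiples (2 * Real.pi * I)) := fun p hp => by
    obtain ⟨n, hn⟩ := exp_eq_one_iff.mp (hexp p hp)
    exact ⟨n, by simp [hn, zsmul_eq_mul]⟩
  exact hS.constant_of_mapsTo (SetLike.isDiscrete_iff_discreteTopology.mpr inferInstance) hg hmaps
    hp hq

theorem IsPreconnected.mixed_difference_eq_zero_of_exp_eq_mul {α β : Type*} [TopologicalSpace α]
    [TopologicalSpace β] {s : Set α} {t : Set β} (hs : IsPreconnected s) (ht : IsPreconnected t)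
    {Λ : α × β → ℂ} (hΛ : ContinuousOn Λ (s ×ˢ t)) {a : α → ℂ} {b : β → ℂ}
    (hexp : ∀ x ∈ s, ∀ y ∈ t, exp (Λ (x, y)) = a x * b y)
    {x₀ x : α} {y₀ y : β} (hx₀ : x₀ ∈ s) (hx : x ∈ s) (hy₀ : y₀ ∈ t) (hy : y ∈ t) :
    Λ (x, y) + Λ (x₀, y₀) - Λ (x, y₀) - Λ (x₀, y) = 0 := by
  set g : α × β → ℂ := fun p => Λ p + Λ (x₀, y₀) - Λ (p.1, y₀) - Λ (x₀, p.2)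
  have hg : ContinuousOn g (s ×ˢ t) :=
    ((hΛ.add continuousOn_const).sub
      (hΛ.comp (continuousOn_fst.prodMk continuousOn_const) fun p hp => ⟨hp.1, hy₀⟩)).sub
      (hΛ.comp (continuousOn_const.prodMk continuousOn_snd) fun p hp => ⟨hx₀, hp.2⟩)
  have hexp_g : ∀ p ∈ s ×ˢ t, exp (g p) = 1 := by
    rintro ⟨x, y⟩ ⟨hx, hy⟩
    have hne : ∀ x ∈ s, ∀ y ∈ t, a x * b y ≠ 0 := fun x hx y hy => hexp x hx y hy ▸ exp_ne_zero _
    obtain ⟨hax, hby₀⟩ := mul_ne_zero_iff.mp (hne x hx y₀ hy₀)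
    obtain ⟨hax₀, hby⟩ := mul_ne_zero_iff.mp (hne x₀ hx₀ y hy)
    simp only [g, exp_sub, exp_add, hexp _ hx _ hy, hexp _ hx₀ _ hy₀, hexp _ hx _ hy₀,
      hexp _ hx₀ _ hy]
    field_simp
  have g₀ : g (x₀, y₀) = 0 := by simp [g]
  exact (hs.prod ht).eq_of_exp_eq_one hg hexp_g ⟨hx, hy⟩ ⟨hx₀, hy₀⟩ |>.trans g₀

theorem eq_zero_on_ball_of_eq_zero_on_real {g : ℂ → ℂ} {r : ℝ}
    (hg : DifferentiableOn ℂ g (ball 0 r)) (hreal : ∀ x : ℝ, |x| < r → g x = 0) :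
    ∀ z ∈ ball (0 : ℂ) r, g z = 0 := by
  intro z hz
  have hr : 0 < r := (norm_nonneg z).trans_lt (mem_ball_zero_iff.mp hz)
  have hev : ∀ᶠ x : ℝ in 𝓝[≠] 0, g x = 0 := eventually_nhdsWithin_of_eventually_nhds <|
    mem_of_superset (ball_mem_nhds 0 hr) fun x hx => hreal x (by simpa using hx)
  have hfreq : ∃ᶠ w in 𝓝[≠] (0 : ℂ), g w = 0 :=
    (continuous_ofReal.continuousWithinAt.tendsto_nhdsWithin fun _ hx => by
      simpa using hx).frequently hev.frequently
  exact (hg.analyticOnNhd isOpen_ball).eqOn_zero_of_preconnected_of_frequently_eq_zero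
    (convex_ball 0 r).isPreconnected (mem_ball_self hr) hfreq hz

theorem add_mul_I_mem_ball {r : ℝ} {x y : ℂ} (hx : x ∈ ball (0 : ℂ) (r / 2))
    (hy : y ∈ ball (0 : ℂ) (r / 2)) : x + y * I ∈ ball (0 : ℂ) r := by
  rw [mem_ball_zero_iff] at *
  calc ‖x + y * I‖ ≤ ‖x‖ + ‖y‖ := by simpa using norm_add_le x (y * I)
    _ < r := by linarith

theorem sub_mul_I_mem_ball {r : ℝ} {x y : ℂ} (hx : x ∈ ball (0 : ℂ) (r / 2))
    (hy : y ∈ ball (0 : ℂ) (r / 2)) : x - y * I ∈ ball (0 : ℂ) r := by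
  have hy' : -y ∈ ball (0 : ℂ) (r / 2) := by simpa using hy
  simpa [sub_eq_add_neg] using add_mul_I_mem_ball hx hy'

theorem eq_zero_of_eq_zero_on_conj_diagonal {Φ : ℂ × ℂ → ℂ} {r : ℝ}
    (hΦ : DifferentiableOn ℂ Φ (ball 0 r ×ˢ ball 0 r))
    (hdiag : ∀ z ∈ ball (0 : ℂ) r, Φ (z, conj z) = 0) :
    ∀ z ∈ ball (0 : ℂ) (r / 2), ∀ w ∈ ball (0 : ℂ) (r / 2), Φ (z, w) = 0 := by
  -- In the coordinates `(z, w) = (x + y I, x - y I)` the set `w = conj z` is `x, y ∈ ℝ`: apply the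
  -- one-variable identity theorem first in `x`, then in `y`.
  set ψ : ℂ → ℂ → ℂ × ℂ := fun x y => (x + y * I, x - y * I)
  have hψ : ∀ x ∈ ball (0 : ℂ) (r / 2), ∀ y ∈ ball (0 : ℂ) (r / 2),
      ψ x y ∈ ball 0 r ×ˢ ball 0 r :=
    fun x hx y hy => ⟨add_mul_I_mem_ball hx hy, sub_mul_I_mem_ball hx hy⟩
  have real_y : ∀ y : ℝ, |y| < r / 2 → ∀ x ∈ ball (0 : ℂ) (r / 2), Φ (ψ x y) = 0 := by
    intro y hy
    have hy' : (y : ℂ) ∈ ball (0 : ℂ) (r / 2) := by simpa using hy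
    refine eq_zero_on_ball_of_eq_zero_on_real
      (hΦ.comp (by fun_prop) fun x hx => hψ x hx y hy') fun x hx => ?_
    have hx' : (x : ℂ) ∈ ball (0 : ℂ) (r / 2) := by simpa using hx
    have hconj : ψ x y = ((x : ℂ) + y * I, conj ((x : ℂ) + y * I)) := by
      simp only [ψ, map_add, map_mul, conj_ofReal, conj_I]
      ring_nf
    rw [hconj]
    exact hdiag _ (hψ x hx' y hy').1
  have all_y : ∀ x ∈ ball (0 : ℂ) (r / 2), ∀ y ∈ ball (0 : ℂ) (r / 2), Φ (ψ x y) = 0 :=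
    fun x hx => eq_zero_on_ball_of_eq_zero_on_real
      (hΦ.comp (by fun_prop) fun y hy => hψ x hx y hy) fun y hy => real_y y hy x hx
  intro z hz w hw
  have hx : (z + w) / 2 ∈ ball (0 : ℂ) (r / 2) := by
    rw [mem_ball_zero_iff] at *
    calc ‖(z + w) / 2‖ ≤ (‖z‖ + ‖w‖) / 2 := by
          simpa using div_le_div_of_nonneg_right (norm_add_le z w) zero_le_two
      _ < r / 2 := by linarith
  have hy : (w - z) * I / 2 ∈ ball (0 : ℂ) (r / 2) := by
    rw [mem_ball_zero_iff] at *
    calc ‖(w - z) * I / 2‖ ≤ (‖w‖ + ‖z‖) / 2 := by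
          simpa using div_le_div_of_nonneg_right (norm_sub_le w z) zero_le_two
      _ < r / 2 := by linarith
  have hzw : ψ ((z + w) / 2) ((w - z) * I / 2) = (z, w) := by
    ext <;> simp only [ψ] <;> ring_nf <;> simp [I_sq] <;> ring
  simpa [hzw] using all_y _ hx _ hy

noncomputable def polarLog (f : ℂ → ℂ) (p : ℂ × ℂ) : ℂ := log (1 - f p.1 * conj (f (conj p.2)))

theorem polarLog_conj_diag {f : ℂ → ℂ} {z : ℂ} (hz : ‖f z‖ ≤ 1) :
    polarLog f (z, conj z) = Real.log (1 - ‖f z‖ ^ 2) := by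
  have : 0 ≤ 1 - ‖f z‖ ^ 2 := by nlinarith [norm_nonneg (f z)]
  rw [polarLog, conj_conj, mul_conj, ofReal_log this, normSq_eq_norm_sq]
  push_cast
  rfl

theorem differentiableOn_polarLog {f : ℂ → ℂ} (hf : DifferentiableOn ℂ f (ball 0 1))
    (hmaps : MapsTo f (ball 0 1) (ball 0 1)) :
    DifferentiableOn ℂ (polarLog f) (ball 0 1 ×ˢ ball 0 1) := by
  refine (((hf.comp differentiableOn_fst mapsTo_fst_prod).mul
    (hf.conj_conj_ball.comp differentiableOn_snd mapsTo_snd_prod)).const_sub 1).clog ?_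
  rintro ⟨z, w⟩ ⟨hz, hw⟩
  have hw' : conj w ∈ ball (0 : ℂ) 1 := by simpa using hw
  refine one_sub_mem_slitPlane (norm_mul_lt_one (mem_ball_zero_iff.mp (hmaps hz)) ?_)
  simpa using mem_ball_zero_iff.mp (hmaps hw')

theorem exp_polarLog_sub_eq {f h : ℂ → ℂ} {lam mu : ℝ} (hf : DifferentiableOn ℂ f (ball 0 1))
    (hmaps : MapsTo f (ball 0 1) (ball 0 1)) (hh : DifferentiableOn ℂ h (ball 0 1))
    (heq : ∀ z ∈ ball (0 : ℂ) 1, (1 - ‖f z‖ ^ 2) ^ mu = ‖h z‖ ^ 2 * (1 - ‖z‖ ^ 2) ^ lam) :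
    ∀ z ∈ ball (0 : ℂ) (1 / 2), ∀ w ∈ ball (0 : ℂ) (1 / 2),
      exp (mu * polarLog f (z, w) - lam * polarLog id (z, w)) = h z * conj (h (conj w)) := by
  set Φ : ℂ × ℂ → ℂ := fun p =>
    exp (mu * polarLog f p - lam * polarLog id p) - h p.1 * conj (h (conj p.2))
  have hΦ : DifferentiableOn ℂ Φ (ball 0 1 ×ˢ ball 0 1) :=
    ((((differentiableOn_polarLog hf hmaps).const_mul _).sub
      ((differentiableOn_polarLog differentiableOn_id (mapsTo_id _)).const_mul _)).cexp).sub
      ((hh.comp differentiableOn_fst mapsTo_fst_prod).mul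
        (hh.conj_conj_ball.comp differentiableOn_snd mapsTo_snd_prod))
  have hdiag : ∀ z ∈ ball (0 : ℂ) 1, Φ (z, conj z) = 0 := by
    intro z hz
    have hz1 := mem_ball_zero_iff.mp hz
    have hfz1 := mem_ball_zero_iff.mp (hmaps hz)
    have hfz : 0 < 1 - ‖f z‖ ^ 2 := by nlinarith [norm_nonneg (f z)]
    have hz' : 0 < 1 - ‖z‖ ^ 2 := by nlinarith [norm_nonneg z]
    have key : Real.exp (mu * Real.log (1 - ‖f z‖ ^ 2) - lam * Real.log (1 - ‖z‖ ^ 2)) =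
        ‖h z‖ ^ 2 := by
      rw [Real.exp_sub, mul_comm mu, mul_comm lam, ← Real.rpow_def_of_pos hfz,
        ← Real.rpow_def_of_pos hz', heq z hz,
        mul_div_cancel_right₀ _ (Real.rpow_pos_of_pos hz' _).ne']
    simp only [Φ, sub_eq_zero, polarLog_conj_diag hfz1.le, polarLog_conj_diag (f := id) hz1.le,
      id, conj_conj, mul_conj, normSq_eq_norm_sq]
    exact_mod_cast key
  intro z hz w hw
  exact sub_eq_zero.mp (eq_zero_of_eq_zero_on_conj_diagonal hΦ hdiag z (by simpa using hz) w
    (by simpa using hw))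

noncomputable def blaschke (a z : ℂ) : ℂ := (z - a) / (1 - conj a * z)

theorem conj_blaschke (a z : ℂ) : conj (blaschke a z) = blaschke (conj a) (conj z) := by
  simp [blaschke, map_div₀]

theorem differentiableOn_blaschke {a : ℂ} (ha : ‖a‖ < 1) :
    DifferentiableOn ℂ (blaschke a) (ball 0 1) :=
  (differentiableOn_id.sub_const a).div (differentiableOn_id.const_mul _ |>.const_sub 1)
    fun z hz => one_sub_mul_ne_zero (by simpa using ha) (mem_ball_zero_iff.mp hz)

theorem blaschke_neg_blaschke {a z : ℂ} (ha : ‖a‖ < 1) (hz : ‖z‖ < 1) :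
    blaschke (-a) (blaschke a z) = z := by
  have h1 := one_sub_mul_ne_zero (a := conj a) (by simpa using ha) hz
  have h2 := one_sub_mul_ne_zero (a := conj a) (by simpa using ha) ha
  have hnum : (z - a) / (1 - conj a * z) - -a = z * (1 - conj a * a) / (1 - conj a * z) := by
    rw [eq_div_iff h1, sub_mul, div_mul_cancel₀ _ h1]
    ring
  have hden : 1 - conj (-a) * ((z - a) / (1 - conj a * z)) =
      (1 - conj a * a) / (1 - conj a * z) := by
    rw [eq_div_iff h1, sub_mul, mul_assoc, div_mul_cancel₀ _ h1, map_neg]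
    ring
  rw [blaschke, blaschke, hnum, hden, div_div_div_cancel_right₀ h1, mul_div_cancel_right₀ _ h2]

theorem blaschke_mul_of_norm_eq_one {a c z : ℂ} (hc : ‖c‖ = 1) :
    blaschke a (c * z) = c * blaschke (a * conj c) z := by
  have hcc : c * conj c = 1 := by rw [mul_conj', hc]; simp
  simp only [blaschke, map_mul, conj_conj]
  rw [mul_div_assoc']
  congr 1
  · linear_combination a * hcc
  · ring

theorem one_sub_blaschke_mul_blaschke_conj {a ζ η : ℂ} (hζ : 1 - ζ * conj a ≠ 0)
    (hη : 1 - a * η ≠ 0) :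
    1 - blaschke a ζ * blaschke (conj a) η =
      (1 - ζ * η) * (1 - a * conj a) / (1 - ζ * conj a) / (1 - a * η) := by
  rw [blaschke, blaschke, conj_conj, mul_comm (conj a) ζ, div_mul_div_comm, div_div,
    eq_div_iff (mul_ne_zero hζ hη), sub_mul, div_mul_cancel₀ _ (mul_ne_zero hζ hη)]
  ring

theorem Real.eq_one_of_one_sub_rpow_eq {t u : ℝ} (ht : 0 < t) (hu : u ≠ 0) (hu1 : u ≤ 1)
    (h : (1 - u) ^ t = 1 - t * u) : t = 1 := by
  have hs : -1 ≤ -u := by linarith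
  have hs' : -u ≠ 0 := neg_ne_zero.mpr hu
  rcases lt_trichotomy t 1 with ht1 | ht1 | ht1
  · have := rpow_one_add_lt_one_add_mul_self hs hs' ht ht1
    simp only [← sub_eq_add_neg, mul_neg] at this
    linarith
  · exact ht1
  · have := one_add_mul_self_lt_rpow_one_add hs hs' ht1
    simp only [← sub_eq_add_neg, mul_neg] at this
    linarith

theorem hasDerivAt_exp_mul_log_one_sub_mul (t w : ℂ) :
    HasDerivAt (fun z => exp (t * log (1 - z * w))) (-(t * w)) 0 := by
  have hlin : HasDerivAt (fun z : ℂ => 1 - z * w) (-w) 0 := by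
    simpa using ((hasDerivAt_id (0 : ℂ)).mul_const w).const_sub 1
  have hlog := (hlin.clog (by simp)).const_mul t |>.cexp
  simpa using hlog

/-- The polarized form, on `ball 0 r`, of `1 - ‖F z‖ ^ 2 = (1 - ‖z‖ ^ 2) ^ t`. -/
def MapsKernelToPow (F : ℂ → ℂ) (t r : ℝ) : Prop :=
  ∀ z ∈ ball (0 : ℂ) r, ∀ w ∈ ball (0 : ℂ) r,
    1 - F z * conj (F (conj w)) = exp (t * log (1 - z * w))

namespace MapsKernelToPow

variable {F : ℂ → ℂ} {t r : ℝ}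

theorem deriv_mul_conj (hK : MapsKernelToPow F t r) (hr : 0 < r) (hF : DifferentiableAt ℂ F 0)
    {w : ℂ} (hw : w ∈ ball (0 : ℂ) r) : deriv F 0 * conj (F (conj w)) = t * w := by
  have hev : (fun z => exp (t * log (1 - z * w))) =ᶠ[𝓝 0] fun z => 1 - F z * conj (F (conj w)) :=
    eventuallyEq_of_mem (ball_mem_nhds 0 hr) fun z hz => (hK z hz w hw).symm
  have := ((hasDerivAt_exp_mul_log_one_sub_mul t w).congr_of_eventuallyEq hev.symm).unique
    ((hF.hasDerivAt.mul_const _).const_sub 1)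
  exact neg_inj.mp this.symm

theorem exists_linear (hK : MapsKernelToPow F t r) (hr : 0 < r) (ht : t ≠ 0)
    (hF : DifferentiableAt ℂ F 0) :
    ∃ c : ℂ, conj c * c = t ∧ ∀ z ∈ ball (0 : ℂ) r, F z = c * z := by
  have hw₀ : ((r / 2 : ℝ) : ℂ) ∈ ball (0 : ℂ) r := by
    rw [mem_ball_zero_iff, norm_real, Real.norm_of_nonneg (by positivity)]
    linarith
  have hw₀ne : ((r / 2 : ℝ) : ℂ) ≠ 0 := by exact_mod_cast (by positivity : r / 2 ≠ 0)
  have hd : conj (deriv F 0) ≠ 0 := by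
    refine (map_ne_zero conj).mpr fun h0 => ?_
    have := hK.deriv_mul_conj hr hF hw₀
    rw [h0, zero_mul] at this
    exact mul_ne_zero (ofReal_ne_zero.mpr ht) hw₀ne this.symm
  set c := (t : ℂ) / conj (deriv F 0)
  have hFc : ∀ z ∈ ball (0 : ℂ) r, F z = c * z := by
    intro z hz
    have := congrArg conj (hK.deriv_mul_conj hr hF (w := conj z) (by simpa using hz))
    simp only [map_mul, conj_conj, conj_ofReal] at this
    rw [div_mul_eq_mul_div, eq_div_iff hd, ← this]
    ring
  refine ⟨c, ?_, hFc⟩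
  have hderiv : deriv F 0 = c := by
    rw [(eventuallyEq_of_mem (ball_mem_nhds 0 hr) hFc).deriv_eq]
    simp
  have := hK.deriv_mul_conj hr hF hw₀
  rw [hderiv, hFc _ (by simpa using hw₀), map_mul, conj_conj] at this
  exact mul_right_cancel₀ hw₀ne (by linear_combination this)

theorem eq_one_and_exists_rotation (hK : MapsKernelToPow F t r) (hr : 0 < r) (ht : t ≠ 0)
    (hF : DifferentiableAt ℂ F 0) :
    t = 1 ∧ ∃ c : ℂ, ‖c‖ = 1 ∧ ∀ z ∈ ball (0 : ℂ) r, F z = c * z := by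
  obtain ⟨c, hcc, hFc⟩ := hK.exists_linear hr ht hF
  have hnorm : ‖c‖ ^ 2 = t := by exact_mod_cast (conj_mul' c).symm.trans hcc
  have htpos : 0 < t := lt_of_le_of_ne (hnorm ▸ by positivity) (Ne.symm ht)
  set s := min r 1 / 2 with hs_def
  have hs : 0 < s := by positivity
  have hs1 : s < 1 := by have := min_le_right r 1; linarith
  have hsr : (s : ℂ) ∈ ball (0 : ℂ) r := by
    rw [mem_ball_zero_iff, norm_real, Real.norm_of_nonneg hs.le]
    have := min_le_left r 1; linarith
  have hpos : 0 < 1 - s * s := by nlinarith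
  have hrpow : (1 - s * s) ^ t = 1 - t * (s * s) := by
    have h1 := hK s hsr s hsr
    rw [hFc s hsr, conj_ofReal, hFc s hsr, map_mul, conj_ofReal] at h1
    have : (((1 - s * s) ^ t : ℝ) : ℂ) = ((1 - t * (s * s) : ℝ) : ℂ) := by
      rw [ofReal_cpow hpos.le, cpow_def_of_ne_zero (by exact_mod_cast hpos.ne'), mul_comm]
      push_cast
      rw [← h1, ← hcc]
      ring
    exact_mod_cast this
  have ht1 := Real.eq_one_of_one_sub_rpow_eq htpos (by positivity) (by nlinarith) hrpow
  refine ⟨ht1, c, ?_, hFc⟩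
  nlinarith [norm_nonneg c]

end MapsKernelToPow

theorem exp_polarLog_mixed {f : ℂ → ℂ} (hmaps : MapsTo f (ball 0 1) (ball 0 1)) {z w : ℂ}
    (hz : z ∈ ball (0 : ℂ) 1) (hw : w ∈ ball (0 : ℂ) 1) :
    exp (polarLog f (z, w) + polarLog f (0, 0) - polarLog f (z, 0) - polarLog f (0, w)) =
      1 - blaschke (f 0) (f z) * conj (blaschke (f 0) (f (conj w))) := by
  have hf : ∀ ζ ∈ ball (0 : ℂ) 1, ‖f ζ‖ < 1 := fun ζ hζ => mem_ball_zero_iff.mp (hmaps hζ)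
  have hfc : ∀ ζ ∈ ball (0 : ℂ) 1, ‖conj (f ζ)‖ < 1 := fun ζ hζ => by simpa using hf ζ hζ
  have h0 : (0 : ℂ) ∈ ball (0 : ℂ) 1 := mem_ball_self one_pos
  have hw' : conj w ∈ ball (0 : ℂ) 1 := by simpa using hw
  simp only [polarLog, exp_sub, exp_add, map_zero]
  rw [exp_log (one_sub_mul_ne_zero (hf z hz) (hfc _ hw')),
    exp_log (one_sub_mul_ne_zero (hf 0 h0) (hfc 0 h0)),
    exp_log (one_sub_mul_ne_zero (hf z hz) (hfc 0 h0)),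
    exp_log (one_sub_mul_ne_zero (hf 0 h0) (hfc _ hw')), conj_blaschke,
    one_sub_blaschke_mul_blaschke_conj (one_sub_mul_ne_zero (hf z hz) (hfc 0 h0))
      (one_sub_mul_ne_zero (hf 0 h0) (hfc _ hw'))]

theorem mapsKernelToPow_blaschke_comp {f h : ℂ → ℂ} {lam mu : ℝ} (hmu : mu ≠ 0)
    (hf : DifferentiableOn ℂ f (ball 0 1)) (hmaps : MapsTo f (ball 0 1) (ball 0 1))
    (hh : DifferentiableOn ℂ h (ball 0 1))
    (heq : ∀ z ∈ ball (0 : ℂ) 1, (1 - ‖f z‖ ^ 2) ^ mu = ‖h z‖ ^ 2 * (1 - ‖z‖ ^ 2) ^ lam) :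
    MapsKernelToPow (blaschke (f 0) ∘ f) (lam / mu) (1 / 2) := by
  intro z hz w hw
  have hball : ball (0 : ℂ) (1 / 2) ⊆ ball 0 1 := ball_subset_ball (by norm_num)
  have hΛ : ContinuousOn (fun p => mu * polarLog f p - lam * polarLog id p)
      (ball 0 (1 / 2) ×ˢ ball 0 (1 / 2)) :=
    (((differentiableOn_polarLog hf hmaps).const_mul _).sub
      ((differentiableOn_polarLog differentiableOn_id (mapsTo_id _)).const_mul _)).continuousOn.mono
      (prod_mono hball hball)
  have hconn := (convex_ball (0 : ℂ) (1 / 2)).isPreconnected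
  have h0 : (0 : ℂ) ∈ ball (0 : ℂ) (1 / 2) := mem_ball_self (by norm_num)
  have hmix := hconn.mixed_difference_eq_zero_of_exp_eq_mul hconn hΛ
    (exp_polarLog_sub_eq hf hmaps hh heq) h0 hz h0 hw
  have hid : ∀ p : ℂ × ℂ, polarLog id p = log (1 - p.1 * p.2) := by simp [polarLog]
  simp only [hid, mul_zero, zero_mul, sub_zero, log_one] at hmix
  rw [Function.comp_apply, Function.comp_apply, ← exp_polarLog_mixed hmaps (hball hz) (hball hw)]
  congr 1
  rw [ofReal_div, div_mul_eq_mul_div, eq_div_iff (ofReal_ne_zero.mpr hmu)]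
  linear_combination hmix

theorem holomorphic_isometry_disk_is_automorphism_general
    (lam mu : ℝ) (hlam : 0 < lam) (hmu : 0 < mu)
    (f : ℂ → ℂ)
    (hf_maps : ∀ z ∈ Metric.ball (0 : ℂ) 1, f z ∈ Metric.ball (0 : ℂ) 1)
    (hf_holo : DifferentiableOn ℂ f (Metric.ball 0 1))
    (h : ℂ → ℂ)
    (hh_holo : DifferentiableOn ℂ h (Metric.ball 0 1))
    (heq : ∀ z ∈ Metric.ball (0 : ℂ) 1,
      (1 - ‖f z‖ ^ 2) ^ mu = ‖h z‖ ^ 2 * (1 - ‖z‖ ^ 2) ^ lam) :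
    lam = mu ∧
      ∃ (θ : ℝ) (a : ℂ), ‖a‖ < 1 ∧
        ∀ z ∈ Metric.ball (0 : ℂ) 1,
          f z = Complex.exp (θ * Complex.I) * (z - a) / (1 - (starRingEnd ℂ) a * z) := by
  have h0 : (0 : ℂ) ∈ ball (0 : ℂ) 1 := mem_ball_self one_pos
  have hb : ‖f 0‖ < 1 := mem_ball_zero_iff.mp (hf_maps 0 h0)
  have hF : DifferentiableAt ℂ (blaschke (f 0) ∘ f) 0 :=
    ((differentiableOn_blaschke hb).differentiableAt (isOpen_ball.mem_nhds (hf_maps 0 h0))).comp 0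
      (hf_holo.differentiableAt (isOpen_ball.mem_nhds h0))
  obtain ⟨ht, c, hc, hFc⟩ := (mapsKernelToPow_blaschke_comp hmu.ne' hf_holo hf_maps hh_holo
    heq).eq_one_and_exists_rotation (by norm_num) (div_pos hlam hmu).ne' hF
  have ha : ‖-f 0 * conj c‖ < 1 := by simpa [hc] using hb
  have hnear : EqOn f (fun z => c * blaschke (-f 0 * conj c) z) (ball 0 (1 / 2)) := fun z hz => by
    have hfz := mem_ball_zero_iff.mp (hf_maps z (ball_subset_ball (by norm_num) hz))
    show f z = c * blaschke (-f 0 * conj c) z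
    rw [← blaschke_mul_of_norm_eq_one hc, ← hFc z hz, Function.comp_apply,
      blaschke_neg_blaschke hb hfz]
  have hall := (hf_holo.analyticOnNhd isOpen_ball).eqOn_of_preconnected_of_eventuallyEq
    (((differentiableOn_blaschke ha).const_mul c).analyticOnNhd isOpen_ball)
    (convex_ball 0 1).isPreconnected h0 (eventuallyEq_of_mem (ball_mem_nhds 0 (by norm_num)) hnear)
  refine ⟨(div_eq_one_iff_eq hmu.ne').mp ht, arg c, -f 0 * conj c, ha, fun z hz => ?_⟩
  have hexp : exp (arg c * I) = c := by simpa [hc] using norm_mul_exp_arg_mul_I c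
  calc f z = c * blaschke (-f 0 * conj c) z := hall hz
    _ = _ := by rw [hexp, blaschke, mul_div_assoc]

theorem holomorphic_isometry_disk_is_automorphism
    (lam mu : ℝ) (hlam : 0 < lam) (hmu : 0 < mu)
    (f : ℂ → ℂ)
    (hf_maps : ∀ z ∈ Metric.ball (0 : ℂ) 1, f z ∈ Metric.ball (0 : ℂ) 1)
    (hf_holo : DifferentiableOn ℂ f (Metric.ball 0 1))
    (h : ℂ → ℂ)
    (hh_holo : DifferentiableOn ℂ h (Metric.ball 0 1))
    (hh_ne : ∀ z ∈ Metric.ball (0 : ℂ) 1, h z ≠ 0)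
    (heq : ∀ z ∈ Metric.ball (0 : ℂ) 1,
      (1 - ‖f z‖ ^ 2) ^ mu = ‖h z‖ ^ 2 * (1 - ‖z‖ ^ 2) ^ lam) :
    lam = mu ∧
      ∃ (θ : ℝ) (a : ℂ), ‖a‖ < 1 ∧
        ∀ z ∈ Metric.ball (0 : ℂ) 1,
          f z = Complex.exp (θ * Complex.I) * (z - a) / (1 - (starRingEnd ℂ) a * z) :=
  holomorphic_isometry_disk_is_automorphism_general lam mu hlam hmu f hf_maps hf_holo h hh_holo heq
end
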